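/- arXiv:math/0504017 — 3 statements merged into one kernel-verified Lean document; each statement's English description precedes it below -/
import Mathlib

section
/- For every prime p and every integer i with 1 ≤ i ≤ p−1, the binomial coefficient C(p,i) divided by p, i.e. (p−1)!/(i!·(p−i)!), satisfies −(p−1)!/(i!·(p−i)!) ≡ (−1)^i · i⁻¹ (mod p), where i⁻¹ denotes the multiplicative inverse of i modulo p. -/
/-!
The quotient `(p-1)!/(i!(p-i)!)` is `C(p,i)/p`, and `i · C(p,i)/p = C(p-1,i-1)`. Modulo `p`,
`(p-1)(p-2)⋯(p-k) ≡ (-1)^k k!`, so `C(p-1,k) ≡ (-1)^k`; dividing by `i` gives the claim.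
-/

open Nat

theorem Nat.factorial_pred_div_eq_choose_div {n k : ℕ} (hn : n ≠ 0) (hk : k ≤ n) :
    (n - 1)! / (k ! * (n - k)!) = n.choose k / n := by
  have hpos : 0 < k ! * (n - k)! := by positivity
  calc (n - 1)! / (k ! * (n - k)!)
      = n * (n - 1)! / (n * (k ! * (n - k)!)) := by
        rw [Nat.mul_div_mul_left _ _ (Nat.pos_of_ne_zero hn)]
    _ = n.choose k * (k ! * (n - k)!) / (n * (k ! * (n - k)!)) := by
        rw [Nat.mul_factorial_pred hn, ← Nat.choose_mul_factorial_mul_factorial hk, mul_assoc]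
    _ = n.choose k / n := Nat.mul_div_mul_right _ _ hpos

theorem Nat.choose_div_self_mul {n k : ℕ} (hn : n ≠ 0) (hk : k ≠ 0) (hdvd : n ∣ n.choose k) :
    n.choose k / n * k = (n - 1).choose (k - 1) := by
  obtain ⟨n, rfl⟩ := Nat.exists_eq_succ_of_ne_zero hn
  obtain ⟨k, rfl⟩ := Nat.exists_eq_succ_of_ne_zero hk
  rw [Nat.div_mul_right_comm hdvd, ← Nat.add_one_mul_choose_eq]
  simp

theorem ZMod.natCast_choose_pred {p k : ℕ} [Fact p.Prime] (hk : k < p) :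
    ((p - 1).choose k : ZMod p) = (-1) ^ k := by
  have hfact : (k ! : ZMod p) ≠ 0 := by
    rw [Ne, ZMod.natCast_eq_zero_iff]
    exact fun h => (Nat.Prime.dvd_factorial Fact.out).mp h |>.not_gt hk
  apply mul_left_cancel₀ hfact
  rw [← Nat.cast_mul, ← Nat.descFactorial_eq_factorial_mul_choose,
    ZMod.cast_descFactorial hk.le, mul_comm]

/-- For every prime `p` and `1 ≤ i ≤ p-1`, one has
`-(p-1)!/(i!·(p-i)!) ≡ (-1)^i · i⁻¹ (mod p)`. -/
theorem stmt_0 (p i : ℕ) (hp : p.Prime) (h1 : 1 ≤ i) (h2 : i ≤ p - 1) :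
    -((Nat.factorial (p - 1) / (Nat.factorial i * Nat.factorial (p - i)) : ℕ) : ZMod p)
      = (-1) ^ i * (i : ZMod p)⁻¹ := by
  have := Fact.mk hp
  have hip : i < p := by omega
  have hi : (i : ZMod p) ≠ 0 := by
    rw [Ne, ZMod.natCast_eq_zero_iff]
    exact fun h => (Nat.le_of_dvd (by omega) h).not_gt hip
  rw [Nat.factorial_pred_div_eq_choose_div hp.ne_zero hip.le]
  have hmul : ((p.choose i / p : ℕ) : ZMod p) * i = (-1) ^ (i - 1) := by
    rw [← Nat.cast_mul, Nat.choose_div_self_mul hp.ne_zero (by omega)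
      (hp.dvd_choose_self (by omega) hip), ZMod.natCast_choose_pred (by omega)]
  obtain ⟨j, rfl⟩ : ∃ j, i = j + 1 := ⟨i - 1, by omega⟩
  rw [(eq_mul_inv_iff_mul_eq₀ hi).mpr hmul, Nat.add_sub_cancel, pow_succ]
  ring
end

section
/- Let V be a pre-Lie algebra and define iterated right powers by x^[1] = x and x^[k+1] = x^[k] ∘ x. Then for all a, b ∈ V and all N ≥ 1, the N-fold iterated bracket ad(b)^N(a) = [...[[a,b],b],...,b] (N brackets) equals Σ_{i=0}^{N} (−1)^i · C(N,i) · (L_i ∘ a) ∘_R b^{(N−i)}, where L_i ∘ a ∘_R b^{(m)} denotes ((...((b∘b)∘b)...∘b)∘a)∘b)∘b)...)∘b with i left factors of b before a and m = N−i right factors of b after a (left-normed), and [a,b] = a∘b − b∘a. -/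
/-!
Record the left-normed expression `T b a i m` by its coordinates `(i, m)`. Bracketing with `b`
acts on these coordinates as `snd - fst`, where `fst` and `snd` are the shifts in `i` and in `m`:
`T b [a, b] i m = T b a i (m + 1) - T b a (i + 1) m`. For `i = 0` this is the definition of the
bracket, and for `i > 0` it is the pre-Lie identity for the triple `(leftPow b (i - 1), a, b)`.
The two shifts commute, so `(snd - fst) ^ N` expands by the binomial theorem.
-/

/-- Left-normed power: `leftPow b n` is the product of `n+1` copies of `b`,
`(((b*b)*b)*⋯)*b`. -/
def leftPow {R : Type*} [Mul R] (b : R) : ℕ → R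
  | 0 => b
  | n + 1 => leftPow b n * b

/-- The left-normed expression `T b a i m = ((((b∘⋯∘b)∘a)∘b)∘⋯)∘b`
with `i` factors of `b` to the left of `a` and `m` factors of `b` to the right. -/
def T {R : Type*} [Mul R] (b a : R) (i m : ℕ) : R :=
  (fun z => z * b)^[m] (if i = 0 then a else leftPow b (i - 1) * a)

open Finset

namespace BiShift

variable {M : Type*} [AddCommGroup M]

def fst : Module.End ℤ (ℕ → ℕ → M) where
  toFun g i m := g (i + 1) m
  map_add' _ _ := rfl
  map_smul' _ _ := rfl

def snd : Module.End ℤ (ℕ → ℕ → M) where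
  toFun g i m := g i (m + 1)
  map_add' _ _ := rfl
  map_smul' _ _ := rfl

lemma fst_pow_apply (k : ℕ) (g : ℕ → ℕ → M) (i m : ℕ) :
    (fst ^ k : Module.End ℤ (ℕ → ℕ → M)) g i m = g (i + k) m := by
  induction k generalizing g with
  | zero => rfl
  | succ k ih => exact ih (fst (M := M) g)

lemma snd_pow_apply (k : ℕ) (g : ℕ → ℕ → M) (i m : ℕ) :
    (snd ^ k : Module.End ℤ (ℕ → ℕ → M)) g i m = g i (m + k) := by
  induction k generalizing g with
  | zero => rfl
  | succ k ih => exact ih (snd (M := M) g)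

lemma commute_fst_snd : Commute (fst : Module.End ℤ (ℕ → ℕ → M)) snd := rfl

theorem snd_sub_fst_pow_apply (N : ℕ) (g : ℕ → ℕ → M) :
    ((snd - fst : Module.End ℤ (ℕ → ℕ → M)) ^ N) g 0 0
      = ∑ i ∈ range (N + 1), ((-1) ^ i * N.choose i : ℤ) • g i (N - i) := by
  rw [sub_eq_neg_add, (commute_fst_snd (M := M)).neg_left.add_pow,
    LinearMap.sum_apply, Finset.sum_apply, Finset.sum_apply]
  refine sum_congr rfl fun i _ => ?_
  have hsign : (-1 : Module.End ℤ (ℕ → ℕ → M)) ^ i = ((-1) ^ i : ℤ) := by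
    push_cast; rfl
  rw [neg_pow, hsign]
  simp only [Module.End.mul_apply, Module.End.intCast_apply, Module.End.natCast_apply,
    Pi.smul_apply, fst_pow_apply, snd_pow_apply, map_nsmul, mul_smul, natCast_zsmul, zero_add]
  exact smul_comm _ _ _

end BiShift

section PreLie

variable {R : Type*} [NonUnitalNonAssocRing R]

lemma iterate_mul_right_sub (b x y : R) (m : ℕ) :
    (fun z => z * b)^[m] (x - y) = (fun z => z * b)^[m] x - (fun z => z * b)^[m] y := by
  induction m generalizing x y with
  | zero => rfl
  | succ m ih => simp only [Function.iterate_succ_apply, sub_mul, ih]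

lemma T_mul_sub_mul (hpre : ∀ a b c : R, (a * b) * c - a * (b * c) = (a * c) * b - a * (c * b))
    (a b : R) (i m : ℕ) :
    T b (a * b - b * a) i m = T b a i (m + 1) - T b a (i + 1) m := by
  simp only [T, Function.iterate_succ_apply, ← iterate_mul_right_sub]
  congr 1
  rcases i with _ | i
  · rfl
  · show leftPow b i * (a * b - b * a) = leftPow b i * a * b - leftPow b i * b * a
    rw [mul_sub, ← sub_eq_zero, ← neg_eq_zero, ← sub_eq_zero.mpr (hpre (leftPow b i) a b)]
    abel

end PreLie

theorem stmt_4_general {R : Type*} [NonUnitalNonAssocRing R]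
    (hpre : ∀ a b c : R, (a * b) * c - a * (b * c) = (a * c) * b - a * (c * b))
    (a b : R) (N : ℕ) :
    (fun z => z * b - b * z)^[N] a
      = ∑ i ∈ Finset.range (N + 1), ((-1) ^ i * (N.choose i) : ℤ) • T b a i (N - i) := by
  have hsemiconj : Function.Semiconj (T b) (fun z => z * b - b * z)
      (BiShift.snd - BiShift.fst : Module.End ℤ (ℕ → ℕ → R)) :=
    fun x => funext₂ (T_mul_sub_mul hpre x b)
  calc (fun z => z * b - b * z)^[N] a = T b ((fun z => z * b - b * z)^[N] a) 0 0 := rfl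
    _ = ((BiShift.snd - BiShift.fst : Module.End ℤ (ℕ → ℕ → R)) ^ N) (T b a) 0 0 := by
      rw [hsemiconj.iterate_right, Module.End.coe_pow]
    _ = _ := BiShift.snd_sub_fst_pow_apply N (T b a)

/-- In a pre-Lie algebra, the `N`-fold iterated bracket `[...[[a,b],b],...,b]` equals
`Σ_{i=0}^{N} (-1)^i C(N,i) · T(i,a,N-i)`. -/
theorem stmt_4 {R : Type*} [NonUnitalNonAssocRing R]
    (hpre : ∀ a b c : R, (a * b) * c - a * (b * c) = (a * c) * b - a * (c * b))
    (a b : R) (N : ℕ) (hN : 1 ≤ N) :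
    (fun z => z * b - b * z)^[N] a
      = ∑ i ∈ Finset.range (N + 1), ((-1) ^ i * (N.choose i) : ℤ) • T b a i (N - i) :=
  stmt_4_general hpre a b N
end

section
/- Let A be an associative ring of prime characteristic p. Then for all a, b ∈ A, (a+b)^p = a^p + b^p + Σ_{i=1}^{p−1} s_i(a,b), where the elements s_i(a,b) are determined by i·s_i(a,b) being the coefficient of t^{i−1} in ad(ta+b)^{p−1}(a) in the polynomial ring A[t]; in particular each s_i(a,b) lies in the Lie subring generated by a and b. -/
/-!
Put `x = C a * X + C b`. Evaluating `x ^ p` at `1` gives `(a + b) ^ p`, so the coefficients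
`s i` of `x ^ p` satisfy the sum formula, the extreme ones being `b ^ p` and `a ^ p`.
Since `(p - 1).choose m ≡ (-1) ^ m [MOD p]`, expanding `ad x = R_x - L_x` binomially gives
`(ad x)^(p-1) r = ∑ x ^ m * r * x ^ (p - 1 - m)`, which for `r = C a = x'` is the Leibniz
expansion of `(x ^ p)'`. Hence `i • s i` is the coefficient of `X ^ (i - 1)` in
`(ad x)^(p-1) (C a)`. As `X` is central, brackets in `A[X]` are computed coefficientwise, so
this coefficient lies in the Lie span of `a` and `b`, and so does `s i` because `i` is a unit
mod `p`.
-/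

open Polynomial Finset

attribute [local instance] LieRing.ofAssociativeRing

theorem CharP.cast_choose_pred_prime {R : Type*} [Ring R] (p : ℕ) [hp : Fact p.Prime]
    [CharP R p] {i : ℕ} (hi : i ≤ p - 1) : ((p - 1).choose i : R) = (-1) ^ i := by
  induction i with
  | zero => simp
  | succ i ih =>
    have hpascal : ((p.choose (i + 1) : ℕ) : R) = 0 := (CharP.cast_eq_zero_iff R p _).mpr
      (hp.out.dvd_choose_self i.succ_ne_zero (by omega))
    rw [← Nat.sub_one_add_one hp.out.ne_zero, Nat.choose_succ_succ', Nat.cast_add,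
      ih (by omega)] at hpascal
    rw [pow_succ, mul_neg_one, eq_neg_iff_add_eq_zero, add_comm, hpascal]

theorem iterate_commutator_eq_sum {R : Type*} [Ring R] (x r : R) (n : ℕ) :
    (fun z => z * x - x * z)^[n] r
      = ∑ m ∈ range (n + 1), ((-1) ^ m * n.choose m : ℤ) • (x ^ m * r * x ^ (n - m)) := by
  have had : (fun z => z * x - x * z) = ⇑(-LinearMap.mulLeft ℤ x + LinearMap.mulRight ℤ x) := by
    funext z; simp [sub_eq_neg_add]
  have hcomm : Commute (-LinearMap.mulLeft ℤ x) (LinearMap.mulRight ℤ x) :=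
    (LinearMap.commute_mulLeft_right x x).neg_left
  rw [had, ← Module.End.coe_pow, hcomm.add_pow, LinearMap.sum_apply]
  refine sum_congr rfl fun m _ => ?_
  rw [← neg_one_zsmul (LinearMap.mulLeft ℤ x), _root_.smul_pow, LinearMap.pow_mulLeft,
    LinearMap.pow_mulRight, Module.End.mul_apply, Module.End.mul_apply, LinearMap.smul_apply,
    Module.End.natCast_apply, LinearMap.mulRight_apply, LinearMap.mulLeft_apply, mul_smul,
    natCast_zsmul, smul_mul_assoc, mul_smul_comm, mul_assoc]

theorem Polynomial.derivative_pow_eq_sum {R : Type*} [Semiring R] (f : R[X]) (n : ℕ) :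
    derivative (f ^ n) = ∑ i ∈ range n, f ^ i * derivative f * f ^ (n - 1 - i) := by
  induction n with
  | zero => simp
  | succ n ih =>
    rw [pow_succ, derivative_mul, ih, sum_range_succ, sum_mul, Nat.add_sub_cancel, Nat.sub_self,
      pow_zero, mul_one]
    congr 1
    refine sum_congr rfl fun i hi => ?_
    rw [mem_range] at hi
    rw [mul_assoc, ← pow_succ, show n - 1 - i + 1 = n - i by omega]

theorem CharP.iterate_commutator_pred_eq_sum {R : Type*} [Ring R] (p : ℕ) [Fact p.Prime]
    [CharP R p] (x r : R) :
    (fun z => z * x - x * z)^[p - 1] r = ∑ m ∈ range p, x ^ m * r * x ^ (p - 1 - m) := by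
  rw [iterate_commutator_eq_sum, Nat.sub_one_add_one (Fact.out : p.Prime).ne_zero]
  refine sum_congr rfl fun m hm => ?_
  rw [zsmul_eq_mul, Int.cast_mul, Int.cast_natCast,
    CharP.cast_choose_pred_prime p (Nat.le_sub_one_of_lt (mem_range.mp hm)), Int.cast_pow,
    Int.cast_neg, Int.cast_one, ← pow_add, ← two_mul, pow_mul, neg_one_sq, one_pow, one_mul]

theorem Polynomial.derivative_pow_char {R : Type*} [Ring R] (p : ℕ) [Fact p.Prime] [CharP R p]
    (f : R[X]) : derivative (f ^ p) = (fun z => z * f - f * z)^[p - 1] (derivative f) := by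
  rw [derivative_pow_eq_sum, CharP.iterate_commutator_pred_eq_sum p]

theorem Polynomial.coeff_commutator {R : Type*} [Ring R] (f g : R[X]) (k : ℕ) :
    (f * g - g * f).coeff k = ∑ ij ∈ antidiagonal k, ⁅f.coeff ij.1, g.coeff ij.2⁆ := by
  simp only [coeff_sub, coeff_mul, Ring.lie_def, sum_sub_distrib]
  congr 1
  rw [← Nat.sum_antidiagonal_swap]
  rfl

theorem Polynomial.coeff_iterate_commutator_mem {R : Type*} [Ring R] (S : LieSubalgebra ℤ R)
    {f g : R[X]} (hf : ∀ k, f.coeff k ∈ S) (hg : ∀ k, g.coeff k ∈ S) (n k : ℕ) :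
    ((fun z => z * f - f * z)^[n] g).coeff k ∈ S := by
  induction n generalizing k with
  | zero => exact hg k
  | succ n ih =>
    rw [Function.iterate_succ_apply', coeff_commutator]
    exact S.sum_mem fun ij _ => S.lie_mem (ih ij.1) (hf ij.2)

theorem mem_of_nsmul_mem_of_coprime {M S : Type*} [AddMonoid M] [SetLike S M]
    [AddSubmonoidClass S M] {H : S} {p i : ℕ} {m : M} (hpm : p • m = 0) (hip : i.Coprime p)
    (him : i • m ∈ H) : m ∈ H := by
  obtain ⟨k, hk⟩ := exists_nsmul_eq_self_of_coprime
    (hip.coprime_dvd_right (addOrderOf_dvd_of_nsmul_eq_zero hpm))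
  exact hk ▸ nsmul_mem him k

theorem Polynomial.nsmul_coeff_eq_coeff_derivative {R : Type*} [Semiring R] (f : R[X]) {i : ℕ}
    (hi : i ≠ 0) : i • f.coeff i = (derivative f).coeff (i - 1) := by
  rw [coeff_derivative, ← Nat.cast_add_one, Nat.sub_one_add_one hi, nsmul_eq_mul']

theorem Polynomial.coeff_C_mem {R S : Type*} [Semiring R] [SetLike S R] [AddSubmonoidClass S R]
    {H : S} {a : R} (ha : a ∈ H) (k : ℕ) : (C a).coeff k ∈ H := by
  rw [coeff_C]
  split_ifs
  exacts [ha, zero_mem H]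

theorem Polynomial.coeff_C_mul_X_add_C_mem {R S : Type*} [Semiring R] [SetLike S R]
    [AddSubmonoidClass S R] {H : S} {a b : R} (ha : a ∈ H) (hb : b ∈ H) (k : ℕ) :
    (C a * X + C b).coeff k ∈ H := by
  rw [coeff_add, coeff_C_mul_X]
  refine add_mem ?_ (coeff_C_mem hb k)
  split_ifs
  exacts [ha, zero_mem H]

theorem Polynomial.eval_one_pow {R : Type*} [Semiring R] (f : R[X]) (n : ℕ) :
    (f ^ n).eval 1 = f.eval 1 ^ n :=
  map_pow (eval₂RingHom' (RingHom.id R) 1 fun _ => Commute.one_right _) f n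

theorem Polynomial.eval_one_eq_sum_coeff {R : Type*} [Semiring R] {f : R[X]} {n : ℕ}
    (hf : f.natDegree ≤ n) : f.eval 1 = ∑ i ∈ range (n + 1), f.coeff i := by
  simp [eval_eq_sum_range' (Nat.lt_succ_of_le hf)]

theorem add_pow_eq_add_add_sum_coeff {R : Type*} [Semiring R] (a b : R) {n : ℕ} (hn : n ≠ 0) :
    (a + b) ^ n = a ^ n + b ^ n + ∑ i ∈ Icc 1 (n - 1), ((C a * X + C b) ^ n).coeff i := by
  set x : R[X] := C a * X + C b
  have hdeg : (x ^ n).natDegree ≤ n := by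
    simpa using natDegree_pow_le_of_le n (natDegree_linear_le (a := a) (b := b))
  have hbot : (x ^ n).coeff 0 = b ^ n := by
    rw [← constantCoeff_apply, map_pow]
    simp [x]
  have htop : (x ^ n).coeff n = a ^ n := by
    simpa [x] using coeff_pow_of_natDegree_le (m := n) (natDegree_linear_le (a := a) (b := b))
  have hsplit : range (n + 1) = insert 0 (insert n (Icc 1 (n - 1))) := by
    ext i
    simp only [mem_range, mem_insert, mem_Icc]
    omega
  rw [show a + b = x.eval 1 by simp [x], ← eval_one_pow, eval_one_eq_sum_coeff hdeg, hsplit,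
    sum_insert (by simp [Ne.symm hn]), sum_insert (by simp; omega), hbot, htop]
  abel

/-- Jacobson's formula: in an associative ring `A` of prime characteristic `p`, for all
`a b : A` there are elements `s i` (for `1 ≤ i ≤ p-1`) such that `i • s i` is the
coefficient of `t^{i-1}` in `ad(t·a+b)^{p-1}(a)` computed in `A[t]`, each `s i` lies in
the Lie subring generated by `a` and `b`, and
`(a+b)^p = a^p + b^p + Σ_{i=1}^{p-1} s i`. -/
theorem stmt_8 {A : Type*} [Ring A] (p : ℕ) [Fact p.Prime] [CharP A p] (a b : A) :
    ∃ s : ℕ → A,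
      (∀ i ∈ Finset.Icc 1 (p - 1),
        i • s i
            = ((fun z => z * (Polynomial.C a * Polynomial.X + Polynomial.C b)
                - (Polynomial.C a * Polynomial.X + Polynomial.C b) * z)^[p - 1]
              (Polynomial.C a)).coeff (i - 1)
          ∧ s i ∈ LieSubalgebra.lieSpan ℤ A {a, b})
      ∧ (a + b) ^ p = a ^ p + b ^ p + ∑ i ∈ Finset.Icc 1 (p - 1), s i := by
  have hp : p.Prime := Fact.out
  set x : A[X] := C a * X + C b
  set S := LieSubalgebra.lieSpan ℤ A {a, b}
  have ha : a ∈ S := LieSubalgebra.subset_lieSpan (by simp)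
  have hb : b ∈ S := LieSubalgebra.subset_lieSpan (by simp)
  have hderiv : derivative (x ^ p) = (fun z => z * x - x * z)^[p - 1] (C a) := by
    rw [derivative_pow_char p, show derivative x = C a by simp [x]]
  refine ⟨fun i => (x ^ p).coeff i, fun i hi => ?_, add_pow_eq_add_add_sum_coeff a b hp.ne_zero⟩
  obtain ⟨hi1, hip⟩ := mem_Icc.mp hi
  have hcoeff : i • (x ^ p).coeff i = ((fun z => z * x - x * z)^[p - 1] (C a)).coeff (i - 1) := by
    rw [nsmul_coeff_eq_coeff_derivative _ (by omega), hderiv]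
  refine ⟨hcoeff, mem_of_nsmul_mem_of_coprime (p := p) ?_
    (Nat.coprime_of_lt_prime (n := i) (by omega) (by omega) hp).symm ?_⟩
  · rw [nsmul_eq_mul, CharP.cast_eq_zero, zero_mul]
  · rw [hcoeff]
    exact coeff_iterate_commutator_mem S (coeff_C_mul_X_add_C_mem ha hb) (coeff_C_mem ha) _ _
end
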